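/- arXiv:2004.10981 — 3 statements merged into one kernel-verified Lean document; each statement's English description precedes it below -/
import Mathlib

section
/- Let (W₁^k,…,W_J^k, Z^k, Λ₁^k,…,Λ_J^k) be a sequence such that: Z^{k+1} exactly minimizes L_{β_k}(W₁^k,…,W_J^k, Z, Λ₁^k,…,Λ_J^k) over Z with ZᵀZ = I_ℓ; each W_j^{k+1} exactly minimizes the linearized subproblem ‖W_j‖₁ + β_k(⟨A_jᵀ(A_j W_j^k + B_j Z^{k+1} − Λ_j^k/β_k), W_j − W_j^k⟩ + ‖W_j − W_j^k‖_F²/(2δ)) over W_j, with δ > 0; and Λ_j^{k+1} = Λ_j^k − β_k(A_j W_j^{k+1} + B_j Z^{k+1}). Suppose for each j that β_k(W_j^{k+1} − W_j^k) → 0 and (Λ_j^{k+1} − Λ_j^k)/β_k → 0 as k → ∞. Then any accumulation point (W₁*,…,W_J*, Z*, Λ₁*,…,Λ_J*, −∑_j (B_j Z*)ᵀ Λ_j*) of the sequence (W₁^k,…,W_J^k, Z^k, Λ₁^k,…,Λ_J^k, −∑_j (B_j Z^k)ᵀ Λ_j^k) satisfies: A_jᵀ Λ_j* ∈ ∂‖W_j*‖₁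 for every j, A_j W_j* + B_j Z* = 0 for every j, and (Z*)ᵀ Z* = I_ℓ. -/
open Matrix Filter Topology

/-- The ℓ1 norm of a real matrix: sum of absolute values of all entries. -/
noncomputable def l1 {α β : Type*} [Fintype α] [Fintype β] (W : Matrix α β ℝ) : ℝ :=
  ∑ i, ∑ j, |W i j|

/-- The Frobenius (trace) inner product of two real matrices. -/
noncomputable def frobInner {α β : Type*} [Fintype α] [Fintype β] (M N : Matrix α β ℝ) : ℝ :=
  ∑ i, ∑ j, M i j * N i j

/-- The squared Frobenius norm of a real matrix. -/
noncomputable def frobSq {α β : Type*} [Fintype α] [Fintype β] (M : Matrix α β ℝ) : ℝ :=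
  ∑ i, ∑ j, (M i j) ^ 2

/-- The subdifferential of a (convex) function on real matrices at a point. -/
def subdiff {α β : Type*} [Fintype α] [Fintype β]
    (f : Matrix α β ℝ → ℝ) (x : Matrix α β ℝ) : Set (Matrix α β ℝ) :=
  {g | ∀ y, f x + frobInner g (y - x) ≤ f y}

/-- The augmented Lagrangian of the sparse GCCA problem:
`L_β(W, Z, Λ) = ∑_j ‖W_j‖₁ − ∑_j ⟨Λ_j, A_j W_j + B_j Z⟩ + (β/2) ∑_j ‖A_j W_j + B_j Z‖_F²`. -/
noncomputable def augL {J ℓ m : ℕ} {n r : Fin J → ℕ}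
    (A : ∀ j, Matrix (Fin (r j)) (Fin (n j)) ℝ)
    (B : ∀ j, Matrix (Fin (r j)) (Fin m) ℝ)
    (β : ℝ)
    (W : ∀ j, Matrix (Fin (n j)) (Fin ℓ) ℝ)
    (Z : Matrix (Fin m) (Fin ℓ) ℝ)
    (Λ : ∀ j, Matrix (Fin (r j)) (Fin ℓ) ℝ) : ℝ :=
  (∑ j, l1 (W j)) - (∑ j, frobInner (Λ j) (A j * W j + B j * Z))
    + β / 2 * ∑ j, frobSq (A j * W j + B j * Z)

/-!
The `W`-update minimizes `‖·‖₁` plus a smooth quadratic model; comparing the minimizer with the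
points of a segment and letting the step shrink to `0` shows, by convexity of `‖·‖₁`, that minus
the gradient of the model is a subgradient of `‖·‖₁` at `W_j^{k+1}`. Substituting the multiplier
update turns it into `A_jᵀ Λ_j^{k+1}` plus terms linear in `β_k (W_j^{k+1} - W_j^k) → 0`, and the
graph of the subdifferential of a continuous function is closed, so the inclusion survives the
limit along the subsequence. The multiplier update also identifies the residual
`A_j W_j^{k+1} + B_j Z^{k+1}` with `-(Λ_j^{k+1} - Λ_j^k)/β_k → 0`, and the Stiefel manifold is
closed.
-/

section Frobenius

variable {α β : Type*} [Fintype α] [Fintype β]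

lemma frobInner_add_left (M N P : Matrix α β ℝ) :
    frobInner (M + N) P = frobInner M P + frobInner N P := by
  simp only [frobInner, Matrix.add_apply, add_mul, Finset.sum_add_distrib]

lemma frobInner_add_right (M N P : Matrix α β ℝ) :
    frobInner M (N + P) = frobInner M N + frobInner M P := by
  simp only [frobInner, Matrix.add_apply, mul_add, Finset.sum_add_distrib]

lemma frobInner_smul_left (t : ℝ) (M N : Matrix α β ℝ) :
    frobInner (t • M) N = t * frobInner M N := by
  simp only [frobInner, Matrix.smul_apply, smul_eq_mul, Finset.mul_sum, mul_assoc]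

lemma frobInner_smul_right (t : ℝ) (M N : Matrix α β ℝ) :
    frobInner M (t • N) = t * frobInner M N := by
  simp only [frobInner, Matrix.smul_apply, smul_eq_mul, Finset.mul_sum, mul_left_comm]

lemma frobSq_add (M N : Matrix α β ℝ) :
    frobSq (M + N) = frobSq M + 2 * frobInner M N + frobSq N := by
  simp only [frobSq, frobInner, Matrix.add_apply, add_sq, Finset.sum_add_distrib, Finset.mul_sum,
    mul_assoc]

lemma frobSq_smul (t : ℝ) (M : Matrix α β ℝ) : frobSq (t • M) = t ^ 2 * frobSq M := by
  simp only [frobSq, Matrix.smul_apply, smul_eq_mul, mul_pow, Finset.mul_sum]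

lemma continuous_l1 : Continuous (l1 : Matrix α β ℝ → ℝ) := by
  unfold l1
  fun_prop

lemma convexOn_l1 : ConvexOn ℝ Set.univ (l1 : Matrix α β ℝ → ℝ) := by
  refine ⟨convex_univ, fun x _ y _ a b ha hb _ => ?_⟩
  calc l1 (a • x + b • y) ≤ ∑ i, ∑ j, (a * |x i j| + b * |y i j|) := by
        refine Finset.sum_le_sum fun i _ => Finset.sum_le_sum fun j _ => ?_
        simpa [abs_mul, abs_of_nonneg ha, abs_of_nonneg hb] using abs_add_le (a * x i j) (b * y i j)
    _ = a • l1 x + b • l1 y := by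
        simp only [l1, Finset.sum_add_distrib, Finset.mul_sum, smul_eq_mul]

lemma Filter.Tendsto.frobInner {ι : Type*} {F : Filter ι} {g x : ι → Matrix α β ℝ}
    {g₀ x₀ : Matrix α β ℝ} (hg : Tendsto g F (𝓝 g₀)) (hx : Tendsto x F (𝓝 x₀)) :
    Tendsto (fun i => _root_.frobInner (g i) (x i)) F (𝓝 (_root_.frobInner g₀ x₀)) := by
  unfold _root_.frobInner
  exact tendsto_finsetSum _ fun i _ => tendsto_finsetSum _ fun j _ =>
    ((hg.apply_nhds i).apply_nhds j).mul ((hx.apply_nhds i).apply_nhds j)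

lemma Filter.Tendsto.matrix_mul {ι κ μ ν : Type*} [Fintype μ] {F : Filter ι}
    {f : ι → Matrix κ μ ℝ} {g : ι → Matrix μ ν ℝ} {M : Matrix κ μ ℝ} {N : Matrix μ ν ℝ}
    (hf : Tendsto f F (𝓝 M)) (hg : Tendsto g F (𝓝 N)) :
    Tendsto (fun i => f i * g i) F (𝓝 (M * N)) := by
  have hmul := (continuous_fst.matrix_mul continuous_snd).tendsto (M, N)
  exact hmul.comp (hf.prodMk_nhds hg)

lemma mem_subdiff_of_tendsto {ι : Type*} {F : Filter ι} [F.NeBot] {f : Matrix α β ℝ → ℝ}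
    (hf : Continuous f) {x g : ι → Matrix α β ℝ} {x₀ g₀ : Matrix α β ℝ}
    (hx : Tendsto x F (𝓝 x₀)) (hg : Tendsto g F (𝓝 g₀))
    (hmem : ∀ᶠ i in F, g i ∈ subdiff f (x i)) : g₀ ∈ subdiff f x₀ := by
  intro y
  have hlim : Tendsto (fun i => f (x i) + frobInner (g i) (y - x i)) F
      (𝓝 (f x₀ + frobInner g₀ (y - x₀))) :=
    ((hf.tendsto x₀).comp hx).add (hg.frobInner (tendsto_const_nhds.sub hx))
  exact le_of_tendsto hlim (hmem.mono fun i hi => hi y)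

noncomputable def linearizedModel (G W₀ : Matrix α β ℝ) (δ : ℝ) (Y : Matrix α β ℝ) : ℝ :=
  frobInner G (Y - W₀) + frobSq (Y - W₀) / (2 * δ)

lemma linearizedModel_add_smul (G W₀ x d : Matrix α β ℝ) (δ t : ℝ) :
    linearizedModel G W₀ δ (x + t • d) = linearizedModel G W₀ δ x
      + t * frobInner (G + δ⁻¹ • (x - W₀)) d + t ^ 2 * (frobSq d / (2 * δ)) := by
  have hY : x + t • d - W₀ = (x - W₀) + t • d := by abel
  simp only [linearizedModel, hY, frobSq_add, frobSq_smul, frobInner_add_left,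
    frobInner_add_right, frobInner_smul_left, frobInner_smul_right]
  ring

lemma le_zero_of_forall_le_mul {a D : ℝ} (h : ∀ t ∈ Set.Ioc (0 : ℝ) 1, a ≤ t * D) : a ≤ 0 := by
  have hlim : Tendsto (fun t : ℝ => t * D) (𝓝[>] 0) (𝓝 0) :=
    ((continuous_mul_const D).tendsto' 0 0 (zero_mul D)).mono_left nhdsWithin_le_nhds
  exact ge_of_tendsto hlim (mem_of_superset (Ioc_mem_nhdsGT one_pos) h)

lemma neg_smul_mem_subdiff_of_minimizer {f : Matrix α β ℝ → ℝ} (hf : ConvexOn ℝ Set.univ f)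
    {c δ : ℝ} {G W₀ x : Matrix α β ℝ}
    (hmin : ∀ Y, f x + c * linearizedModel G W₀ δ x ≤ f Y + c * linearizedModel G W₀ δ Y) :
    -c • (G + δ⁻¹ • (x - W₀)) ∈ subdiff f x := by
  intro y
  rw [frobInner_smul_left]
  refine sub_nonpos.1 (le_zero_of_forall_le_mul (D := c * (frobSq (y - x) / (2 * δ))) ?_)
  rintro t ⟨ht0, ht1⟩
  have hconv : f (x + t • (y - x)) ≤ (1 - t) * f x + t * f y := by
    have h := hf.2 (Set.mem_univ x) (Set.mem_univ y) (sub_nonneg.2 ht1) ht0.le (sub_add_cancel 1 t)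
    rwa [show (1 - t) • x + t • y = x + t • (y - x) by module] at h
  have hopt := hmin (x + t • (y - x))
  rw [linearizedModel_add_smul] at hopt
  refine le_of_mul_le_mul_left ?_ ht0
  linarith

end Frobenius

lemma linearized_update_mem_subdiff_l1 {ρ ν κ : Type*} [Fintype ρ] [Fintype ν] [Fintype κ]
    (A : Matrix ρ ν ℝ) (C : Matrix ρ κ ℝ) {W W' : Matrix ν κ ℝ} {Λ Λ' : Matrix ρ κ ℝ}
    {β δ : ℝ} (hβ : β ≠ 0)
    (hmin : ∀ Y, l1 W' + β * linearizedModel (Aᵀ * (A * W + C - β⁻¹ • Λ)) W δ W'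
      ≤ l1 Y + β * linearizedModel (Aᵀ * (A * W + C - β⁻¹ • Λ)) W δ Y)
    (hΛ : Λ' = Λ - β • (A * W' + C)) :
    Aᵀ * Λ' + Aᵀ * (A * (β • (W' - W))) - δ⁻¹ • (β • (W' - W)) ∈ subdiff l1 W' := by
  convert neg_smul_mem_subdiff_of_minimizer convexOn_l1 hmin using 1
  subst hΛ
  simp only [Matrix.mul_add, Matrix.mul_sub, Matrix.mul_smul, smul_add, smul_sub, smul_smul,
    neg_mul, mul_inv_cancel₀ hβ]
  module

theorem sparse_gcca_inexact_admm_convergence_general (J ℓ m : ℕ) (n r : Fin J → ℕ)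
    (A : ∀ j, Matrix (Fin (r j)) (Fin (n j)) ℝ)
    (B : ∀ j, Matrix (Fin (r j)) (Fin m) ℝ)
    (W : ℕ → ∀ j, Matrix (Fin (n j)) (Fin ℓ) ℝ)
    (Z : ℕ → Matrix (Fin m) (Fin ℓ) ℝ)
    (Λ : ℕ → ∀ j, Matrix (Fin (r j)) (Fin ℓ) ℝ)
    (β : ℕ → ℝ) (hβpos : ∀ k, 0 < β k)
    (δ : ℝ)
    -- `Z^{k+1}` exactly minimizes `L_{β_k}(W^k, ·, Λ^k)` over the Stiefel manifold:
    (hZfeas : ∀ k, (Z (k + 1))ᵀ * Z (k + 1) = 1)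
    -- each `W_j^{k+1}` exactly minimizes the linearized subproblem:
    (hWmin : ∀ k j (W' : Matrix (Fin (n j)) (Fin ℓ) ℝ),
      l1 (W (k + 1) j)
          + β k * (frobInner ((A j)ᵀ * (A j * W k j + B j * Z (k + 1) - (β k)⁻¹ • Λ k j))
                (W (k + 1) j - W k j)
              + frobSq (W (k + 1) j - W k j) / (2 * δ))
        ≤ l1 W'
          + β k * (frobInner ((A j)ᵀ * (A j * W k j + B j * Z (k + 1) - (β k)⁻¹ • Λ k j))
                (W' - W k j)
              + frobSq (W' - W k j) / (2 * δ)))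
    -- multiplier update:
    (hΛ : ∀ k j, Λ (k + 1) j = Λ k j - β k • (A j * W (k + 1) j + B j * Z (k + 1)))
    -- the assumed asymptotic conditions:
    (hWasym : ∀ j, Tendsto (fun k => β k • (W (k + 1) j - W k j)) atTop (𝓝 0))
    (hΛasym : ∀ j, Tendsto (fun k => (β k)⁻¹ • (Λ (k + 1) j - Λ k j)) atTop (𝓝 0)) :
    -- every accumulation point satisfies the KKT conditions:
    ∀ φ : ℕ → ℕ, StrictMono φ →
      ∀ (Wstar : ∀ j, Matrix (Fin (n j)) (Fin ℓ) ℝ) (Zstar : Matrix (Fin m) (Fin ℓ) ℝ)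
        (Λstar : ∀ j, Matrix (Fin (r j)) (Fin ℓ) ℝ),
        (∀ j, Tendsto (fun i => W (φ i) j) atTop (𝓝 (Wstar j))) →
        Tendsto (fun i => Z (φ i)) atTop (𝓝 Zstar) →
        (∀ j, Tendsto (fun i => Λ (φ i) j) atTop (𝓝 (Λstar j))) →
        (∀ j, (A j)ᵀ * Λstar j ∈ subdiff l1 (Wstar j)) ∧
        (∀ j, A j * Wstar j + B j * Zstar = 0) ∧
        Zstarᵀ * Zstar = 1 := by
  intro φ hφ Wstar Zstar Λstar hW hZ hΛlim
  have hφ' : Tendsto φ atTop atTop := hφ.tendsto_atTop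
  refine ⟨fun j => ?_, fun j => ?_, ?_⟩
  · set E := fun k => β k • (W (k + 1) j - W k j)
    have hE : Tendsto (fun i => E (φ i - 1)) atTop (𝓝 0) :=
      (hWasym j).comp ((tendsto_sub_atTop_nat 1).comp hφ')
    have hstep : ∀ᶠ k in atTop,
        (A j)ᵀ * Λ k j + (A j)ᵀ * (A j * E (k - 1)) - δ⁻¹ • E (k - 1) ∈ subdiff l1 (W k j) := by
      refine eventually_atTop.2 ⟨1, fun k hk => ?_⟩
      obtain ⟨k, rfl⟩ := Nat.exists_eq_add_of_le' hk
      exact linearized_update_mem_subdiff_l1 (A j) (B j * Z (k + 1)) (hβpos k).ne'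
        (hWmin k j) (hΛ k j)
    refine mem_subdiff_of_tendsto continuous_l1 (hW j) ?_ (hφ'.eventually hstep)
    have hAt : Tendsto (fun _ : ℕ => (A j)ᵀ) atTop (𝓝 (A j)ᵀ) := tendsto_const_nhds
    simpa using ((hAt.matrix_mul (hΛlim j)).add
      (hAt.matrix_mul (tendsto_const_nhds.matrix_mul hE))).sub (hE.const_smul δ⁻¹)
  · have hres : Tendsto (fun k => A j * W k j + B j * Z k) atTop (𝓝 0) := by
      have hmult : ∀ k,
          -((β k)⁻¹ • (Λ (k + 1) j - Λ k j)) = A j * W (k + 1) j + B j * Z (k + 1) := fun k => by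
        rw [hΛ k j, sub_sub_cancel_left, smul_neg, neg_neg, inv_smul_smul₀ (hβpos k).ne']
      refine (tendsto_add_atTop_iff_nat 1).1 ?_
      simpa only [hmult, neg_zero] using (hΛasym j).neg
    exact tendsto_nhds_unique ((tendsto_const_nhds.matrix_mul (hW j)).add
      (tendsto_const_nhds.matrix_mul hZ)) (hres.comp hφ')
  · have hfeas : Tendsto (fun k => (Z k)ᵀ * Z k) atTop (𝓝 1) :=
      (tendsto_add_atTop_iff_nat 1).1 (by simp only [hZfeas]; exact tendsto_const_nhds)
    exact tendsto_nhds_unique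
      (((continuous_id.matrix_transpose.matrix_mul continuous_id).tendsto Zstar).comp hZ)
      (hfeas.comp hφ')

/-- Theorem 2 of the paper. The iterates follow the inexact
(linearized) distributed ADMM of Algorithm 1: `Z^{k+1}` exactly minimizes the
augmented Lagrangian over the Stiefel manifold, `W_j^{k+1}` exactly minimizes the
linearized subproblem, and the multipliers are updated as usual. If for each `j`
`β_k (W_j^{k+1} − W_j^k) → 0` and `(Λ_j^{k+1} − Λ_j^k)/β_k → 0`, then any accumulation
point of the (extended) sequence satisfies the KKT conditions. -/
theorem sparse_gcca_inexact_admm_convergence (J ℓ m : ℕ) (n r : Fin J → ℕ)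
    (A : ∀ j, Matrix (Fin (r j)) (Fin (n j)) ℝ)
    (B : ∀ j, Matrix (Fin (r j)) (Fin m) ℝ)
    (W : ℕ → ∀ j, Matrix (Fin (n j)) (Fin ℓ) ℝ)
    (Z : ℕ → Matrix (Fin m) (Fin ℓ) ℝ)
    (Λ : ℕ → ∀ j, Matrix (Fin (r j)) (Fin ℓ) ℝ)
    (β : ℕ → ℝ) (hβpos : ∀ k, 0 < β k) (hβmono : Monotone β)
    (δ : ℝ) (hδ : 0 < δ)
    -- `Z^{k+1}` exactly minimizes `L_{β_k}(W^k, ·, Λ^k)` over the Stiefel manifold: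
    (hZfeas : ∀ k, (Z (k + 1))ᵀ * Z (k + 1) = 1)
    (hZmin : ∀ k (Z' : Matrix (Fin m) (Fin ℓ) ℝ), Z'ᵀ * Z' = 1 →
      augL A B (β k) (W k) (Z (k + 1)) (Λ k) ≤ augL A B (β k) (W k) Z' (Λ k))
    -- each `W_j^{k+1}` exactly minimizes the linearized subproblem:
    (hWmin : ∀ k j (W' : Matrix (Fin (n j)) (Fin ℓ) ℝ),
      l1 (W (k + 1) j)
          + β k * (frobInner ((A j)ᵀ * (A j * W k j + B j * Z (k + 1) - (β k)⁻¹ • Λ k j))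
                (W (k + 1) j - W k j)
              + frobSq (W (k + 1) j - W k j) / (2 * δ))
        ≤ l1 W'
          + β k * (frobInner ((A j)ᵀ * (A j * W k j + B j * Z (k + 1) - (β k)⁻¹ • Λ k j))
                (W' - W k j)
              + frobSq (W' - W k j) / (2 * δ)))
    -- multiplier update:
    (hΛ : ∀ k j, Λ (k + 1) j = Λ k j - β k • (A j * W (k + 1) j + B j * Z (k + 1)))
    -- the assumed asymptotic conditions:
    (hWasym : ∀ j, Tendsto (fun k => β k • (W (k + 1) j - W k j)) atTop (𝓝 0))
    (hΛasym : ∀ j, Tendsto (fun k => (β k)⁻¹ • (Λ (k + 1) j - Λ k j)) atTop (𝓝 0)) :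
    -- every accumulation point satisfies the KKT conditions:
    ∀ φ : ℕ → ℕ, StrictMono φ →
      ∀ (Wstar : ∀ j, Matrix (Fin (n j)) (Fin ℓ) ℝ) (Zstar : Matrix (Fin m) (Fin ℓ) ℝ)
        (Λstar : ∀ j, Matrix (Fin (r j)) (Fin ℓ) ℝ),
        (∀ j, Tendsto (fun i => W (φ i) j) atTop (𝓝 (Wstar j))) →
        Tendsto (fun i => Z (φ i)) atTop (𝓝 Zstar) →
        (∀ j, Tendsto (fun i => Λ (φ i) j) atTop (𝓝 (Λstar j))) →
        (∀ j, (A j)ᵀ * Λstar j ∈ subdiff l1 (Wstar j)) ∧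
        (∀ j, A j * Wstar j + B j * Zstar = 0) ∧
        Zstarᵀ * Zstar = 1 :=
  sparse_gcca_inexact_admm_convergence_general J ℓ m n r A B W Z Λ β hβpos δ hZfeas hWmin hΛ hWasym
    hΛasym
end

section
/- (Orthogonal Procrustes / von Neumann trace maximization.) Let C ∈ ℝ^{m×ℓ} with m ≥ ℓ, and let C = U Σ Vᵀ be a singular value decomposition where U ∈ ℝ^{m×ℓ} has orthonormal columns, V ∈ ℝ^{ℓ×ℓ} is orthogonal, and Σ ∈ ℝ^{ℓ×ℓ} is diagonal with nonnegative entries. Then Z* = U Vᵀ maximizes Trace(Zᵀ C) over all Z ∈ ℝ^{m×ℓ} with Zᵀ Z = I_ℓ, and the maximal value equals Trace(Σ), the sum of the singular values of C. -/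
open Matrix Filter Topology

lemma contract_aux {m ℓ : ℕ} (Z : Matrix (Fin m) (Fin ℓ) ℝ) (hZ : Zᵀ * Z = 1)
    (u : Fin m → ℝ) (hu : ∑ j, u j ^ 2 = 1) :
    ∑ k, (Zᵀ *ᵥ u) k ^ 2 ≤ 1 := by
  set w : Fin ℓ → ℝ := Zᵀ *ᵥ u with hw
  set s : ℝ := ∑ k, w k ^ 2 with hs
  have hs0 : 0 ≤ s := Finset.sum_nonneg fun k _ => sq_nonneg _
  have hvw : (Z *ᵥ w) ᵥ* Z = w := by
    have h : Z *ᵥ w = w ᵥ* Zᵀ := by rw [Matrix.vecMul_transpose]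
    rw [h, Matrix.vecMul_vecMul, hZ, Matrix.vecMul_one]
  have hZw : ∑ j, (Z *ᵥ w) j ^ 2 = s := by
    have h1 : ∑ j, (Z *ᵥ w) j ^ 2 = (Z *ᵥ w) ⬝ᵥ (Z *ᵥ w) := by simp [dotProduct, sq]
    rw [h1, Matrix.dotProduct_mulVec, hvw]
    simp [hs, dotProduct, sq]
  have hinner : ∑ j, (Z *ᵥ w) j * u j = s := by
    have h1 : ∑ j, (Z *ᵥ w) j * u j = u ⬝ᵥ (Z *ᵥ w) := by
      simp [dotProduct, mul_comm]
    rw [h1, Matrix.dotProduct_mulVec, ← Matrix.mulVec_transpose, ← hw]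
    simp [hs, dotProduct, sq]
  have hcs := Finset.sum_mul_sq_le_sq_mul_sq Finset.univ (fun j => (Z *ᵥ w) j) u
  rw [hinner, hZw, hu, mul_one] at hcs
  nlinarith

/-- Orthogonal Procrustes / von Neumann trace maximization.
If `C = U Σ Vᵀ` is an SVD with `U` having orthonormal columns, `V` orthogonal and
`Σ` diagonal with nonnegative entries, then `Z* = U Vᵀ` maximizes `Trace(Zᵀ C)` over
`{Z : Zᵀ Z = I}`, and the maximal value is `Trace(Σ)`. -/
theorem procrustes_trace_maximization (m ℓ : ℕ) (hmℓ : ℓ ≤ m)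
    (C : Matrix (Fin m) (Fin ℓ) ℝ)
    (U : Matrix (Fin m) (Fin ℓ) ℝ) (V : Matrix (Fin ℓ) (Fin ℓ) ℝ)
    (S : Matrix (Fin ℓ) (Fin ℓ) ℝ) (d : Fin ℓ → ℝ)
    (hS : S = Matrix.diagonal d) (hd : ∀ i, 0 ≤ d i)
    (hC : C = U * S * Vᵀ) (hU : Uᵀ * U = 1) (hV : Vᵀ * V = 1) :
    (U * Vᵀ)ᵀ * (U * Vᵀ) = 1 ∧
    Matrix.trace ((U * Vᵀ)ᵀ * C) = Matrix.trace S ∧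
    (∀ Z : Matrix (Fin m) (Fin ℓ) ℝ, Zᵀ * Z = 1 →
      Matrix.trace (Zᵀ * C) ≤ Matrix.trace S) := by
  have hVVt : V * Vᵀ = 1 := mul_eq_one_comm.mp hV
  have hUcol : ∀ i, ∑ j, U j i ^ 2 = 1 := by
    intro i
    have h := congrArg (fun M => M i i) hU
    simpa [Matrix.mul_apply, sq] using h
  have hVcol : ∀ i, ∑ k, V k i ^ 2 = 1 := by
    intro i
    have h := congrArg (fun M => M i i) hV
    simpa [Matrix.mul_apply, sq] using h
  refine ⟨?_, ?_, ?_⟩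
  · calc (U * Vᵀ)ᵀ * (U * Vᵀ) = V * (Uᵀ * U) * Vᵀ := by
          rw [Matrix.transpose_mul, Matrix.transpose_transpose]
          rw [Matrix.mul_assoc, Matrix.mul_assoc, Matrix.mul_assoc]
    _ = 1 := by rw [hU, Matrix.mul_one, hVVt]
  · have : (U * Vᵀ)ᵀ * C = V * (Uᵀ * U) * S * Vᵀ := by
      rw [hC, Matrix.transpose_mul, Matrix.transpose_transpose]
      simp only [Matrix.mul_assoc]
    rw [this, hU, Matrix.mul_one, Matrix.trace_mul_comm, ← Matrix.mul_assoc, hV,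
      Matrix.one_mul]
  · intro Z hZ
    have htr : Matrix.trace (Zᵀ * C) = ∑ i, (Vᵀ * (Zᵀ * U)) i i * d i := by
      have h1 : Zᵀ * C = (Zᵀ * U * S) * Vᵀ := by rw [hC]; simp only [Matrix.mul_assoc]
      rw [h1, Matrix.trace_mul_comm]
      have h2 : Vᵀ * (Zᵀ * U * S) = (Vᵀ * (Zᵀ * U)) * S := by simp only [Matrix.mul_assoc]
      rw [h2, hS]
      simp [Matrix.trace, Matrix.mul_diagonal, Matrix.diag]
    have hdiag : ∀ i, (Vᵀ * (Zᵀ * U)) i i ≤ 1 := by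
      intro i
      set w : Fin ℓ → ℝ := Zᵀ *ᵥ (fun j => U j i) with hw
      have hMii : (Vᵀ * (Zᵀ * U)) i i = ∑ k, V k i * w k := by
        simp [Matrix.mul_apply, hw, Matrix.mulVec, dotProduct]
      have hwle : ∑ k, w k ^ 2 ≤ 1 := contract_aux Z hZ _ (hUcol i)
      have hcs := Finset.sum_mul_sq_le_sq_mul_sq Finset.univ (fun k => V k i) w
      rw [hVcol i, one_mul] at hcs
      have : (∑ k, V k i * w k) ^ 2 ≤ 1 := le_trans hcs hwle
      nlinarith [this, hMii]
    rw [htr, hS, Matrix.trace_diagonal]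
    apply Finset.sum_le_sum
    intro i _
    calc (Vᵀ * (Zᵀ * U)) i i * d i ≤ 1 * d i :=
          mul_le_mul_of_nonneg_right (hdiag i) (hd i)
    _ = d i := one_mul _
end

section
/- Fix matrices A_j ∈ ℝ^{r_j×n_j}, B_j ∈ ℝ^{r_j×m}, points W_j ∈ ℝ^{n_j×ℓ}, Z ∈ ℝ^{m×ℓ}, multipliers Λ_j, Λ_j' ∈ ℝ^{r_j×ℓ}, and β, β' > 0. If Λ_j − Λ_j' = β(A_j W_j + B_j Z) for every j, then L_{β'}(W₁,…,W_J, Z, Λ₁',…,Λ_J') = L_β(W₁,…,W_J, Z, Λ₁,…,Λ_J) + ((β + β')/(2β²)) ∑_{j=1}^J ‖Λ_j' − Λ_j‖_F². -/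
open Matrix Filter Topology

/-- If `Λ_j − Λ_j' = β(A_j W_j + B_j Z)` for every `j`, then
`L_{β'}(W, Z, Λ') = L_β(W, Z, Λ) + ((β + β')/(2β²)) ∑_j ‖Λ_j' − Λ_j‖_F²`. -/
theorem augL_multiplier_penalty_identity (J ℓ m : ℕ) (n r : Fin J → ℕ)
    (A : ∀ j, Matrix (Fin (r j)) (Fin (n j)) ℝ)
    (B : ∀ j, Matrix (Fin (r j)) (Fin m) ℝ)
    (W : ∀ j, Matrix (Fin (n j)) (Fin ℓ) ℝ)
    (Z : Matrix (Fin m) (Fin ℓ) ℝ)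
    (Λ Λ' : ∀ j, Matrix (Fin (r j)) (Fin ℓ) ℝ)
    (β β' : ℝ) (hβ : 0 < β) (hβ' : 0 < β')
    (hrel : ∀ j, Λ j - Λ' j = β • (A j * W j + B j * Z)) :
    augL A B β' W Z Λ'
      = augL A B β W Z Λ + (β + β') / (2 * β ^ 2) * ∑ j, frobSq (Λ' j - Λ j) := by
  have hR : ∀ j, Λ' j = Λ j - β • (A j * W j + B j * Z) := by
    intro j
    have h := hrel j
    have h2 : Λ' j + (Λ j - Λ' j) = Λ' j + β • (A j * W j + B j * Z) := by rw [h]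
    rw [add_sub_cancel] at h2
    rw [h2]; abel
  have hInner : ∀ j, frobInner (Λ' j) (A j * W j + B j * Z)
      = frobInner (Λ j) (A j * W j + B j * Z) - β * frobSq (A j * W j + B j * Z) := by
    intro j
    rw [hR j]
    simp only [frobInner, frobSq, Matrix.sub_apply, Matrix.smul_apply, smul_eq_mul,
      Finset.mul_sum, ← Finset.sum_sub_distrib]
    congr 1; ext i; congr 1; ext k; ring
  have hSq : ∀ j, frobSq (Λ' j - Λ j) = β ^ 2 * frobSq (A j * W j + B j * Z) := by
    intro j
    rw [hR j]
    simp only [frobSq, Matrix.sub_apply, Matrix.smul_apply, smul_eq_mul,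
      Finset.mul_sum]
    congr 1; ext i; congr 1; ext k; ring
  simp only [augL, hInner, hSq, Finset.sum_sub_distrib, ← Finset.mul_sum]
  field_simp
  ring
end
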